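/- In the setting of Theorem 3.7 (double extension g = ℝA ⋉_D k_{ω'}(B) of a Kähler flat Lie algebra), the fundamental 2-form ω of (g, J, ⟨·,·⟩) satisfies dω = θ ∧ ω, where θ is the metric dual 1-form of A. Hence (J, ⟨·,·⟩) is an LCK structure on g, and since ad_A = D is skew-symmetric, it is Vaisman. -/
import Mathlib


/-- The bracket of the double extension `g = ℝA ⋉_D (ℝB ⊕_{ω'} k)`, written on
`ℝ × ℝ × k`. -/
def deBracket15 {k : Type*} [LieRing k] [LieAlgebra ℝ k]
    (B' : k →ₗ[ℝ] k →ₗ[ℝ] ℝ) (J' D' : k →ₗ[ℝ] k) :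
    (ℝ × ℝ × k) → (ℝ × ℝ × k) → (ℝ × ℝ × k) :=
  fun u v =>
    (0, B' (J' u.2.2) v.2.2, u.1 • D' v.2.2 - v.1 • D' u.2.2 + ⁅u.2.2, v.2.2⁆)

/-- The complex structure of the double extension. -/
def deJ15 {k : Type*} [LieRing k] [LieAlgebra ℝ k] (J' : k →ₗ[ℝ] k) :
    (ℝ × ℝ × k) → (ℝ × ℝ × k) :=
  fun u => (-u.2.1, u.1, J' u.2.2)

/-- The extended metric: `{A, B}` orthonormal and orthogonal to `k`. -/
def deMetric15 {k : Type*} [LieRing k] [LieAlgebra ℝ k]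
    (B' : k →ₗ[ℝ] k →ₗ[ℝ] ℝ) : (ℝ × ℝ × k) → (ℝ × ℝ × k) → ℝ :=
  fun u v => u.1 * v.1 + u.2.1 * v.2.1 + B' u.2.2 v.2.2

/-- The fundamental 2-form `ω(u,v) = ⟨Ju, v⟩` of the double extension. -/
def deOmega15 {k : Type*} [LieRing k] [LieAlgebra ℝ k]
    (B' : k →ₗ[ℝ] k →ₗ[ℝ] ℝ) (J' : k →ₗ[ℝ] k) :
    (ℝ × ℝ × k) → (ℝ × ℝ × k) → ℝ :=
  fun u v => deMetric15 B' (deJ15 J' u) v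

/-- In the double extension `g = ℝA ⋉_D (ℝB ⊕_{ω'} k)` of a
Kähler flat Lie algebra, the fundamental form satisfies `dω = θ ∧ ω`, where `θ`
is the metric dual of `A` (so `(J, ⟨·,·⟩)` is LCK), and `ad_A = D` is
skew-symmetric (so the structure is Vaisman). -/
theorem doubleExtension_lck_vaisman {k : Type*} [LieRing k] [LieAlgebra ℝ k]
    (B' : k →ₗ[ℝ] k →ₗ[ℝ] ℝ)
    (hsymm : ∀ x y : k, B' x y = B' y x)
    (hpos : ∀ x : k, x ≠ 0 → 0 < B' x x)
    (J' : k →ₗ[ℝ] k)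
    (hJ2 : ∀ x : k, J' (J' x) = -x)
    (hcompat : ∀ x y : k, B' (J' x) (J' y) = B' x y)
    (hNJ' : ∀ x y : k, ⁅J' x, J' y⁆ - ⁅x, y⁆ - J' (⁅J' x, y⁆ + ⁅x, J' y⁆) = 0)
    (hdω' : ∀ x y w : k,
      B' (J' ⁅x, y⁆) w + B' (J' ⁅y, w⁆) x + B' (J' ⁅w, x⁆) y = 0)
    (D' : k →ₗ[ℝ] k)
    (hder : ∀ x y : k, D' ⁅x, y⁆ = ⁅D' x, y⁆ + ⁅x, D' y⁆)
    (hDskew : ∀ x y : k, B' (D' x) y = - B' x (D' y))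
    (hDJ : ∀ x : k, D' (J' x) = J' (D' x)) :
    -- dω = θ ∧ ω, where θ(u) = u.1 is the metric dual of A
    (∀ u v s : ℝ × ℝ × k,
      -(deOmega15 B' J' (deBracket15 B' J' D' u v) s)
        - deOmega15 B' J' (deBracket15 B' J' D' v s) u
        - deOmega15 B' J' (deBracket15 B' J' D' s u) v
      = u.1 * deOmega15 B' J' v s - v.1 * deOmega15 B' J' u s
        + s.1 * deOmega15 B' J' u v) ∧
    -- ad_A is skew-symmetric
    (∀ u v : ℝ × ℝ × k,
      deMetric15 B' (deBracket15 B' J' D' (1, 0, 0) u) v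
        = - deMetric15 B' u (deBracket15 B' J' D' (1, 0, 0) v)) := by
  have hskewJ : ∀ x y : k, B' (J' x) y = - B' (J' y) x := by
    intro x y
    have h := hcompat (J' x) y
    rw [hJ2] at h
    simp only [map_neg, LinearMap.neg_apply] at h
    rw [← h, hsymm (J' y) x]
  have hT : ∀ x y : k, B' (J' (D' x)) y = B' (J' (D' y)) x := by
    intro x y
    calc B' (J' (D' x)) y = B' (D' (J' x)) y := by rw [hDJ]
      _ = - B' (J' x) (D' y) := hDskew _ _
      _ = - B' (J' x) (-(J' (J' (D' y)))) := by rw [hJ2, neg_neg]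
      _ = B' (J' x) (J' (J' (D' y))) := by simp
      _ = B' x (J' (D' y)) := hcompat _ _
      _ = B' (J' (D' y)) x := hsymm _ _
  constructor
  · rintro ⟨a, p, x⟩ ⟨b, q, y⟩ ⟨c, r, z⟩
    simp only [deOmega15, deMetric15, deJ15, deBracket15, map_add, map_sub, map_smul,
      LinearMap.add_apply, LinearMap.sub_apply, LinearMap.smul_apply, smul_eq_mul,
      map_zero, LinearMap.zero_apply, map_neg, LinearMap.neg_apply]
    linear_combination (-1 : ℝ) * hdω' x y z - a * hT y z + b * hT x z - c * hT x y
      + b * hskewJ z x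
  · rintro ⟨a, p, x⟩ ⟨b, q, y⟩
    simp only [deMetric15, deBracket15, map_add, map_sub, map_smul,
      LinearMap.add_apply, LinearMap.sub_apply, LinearMap.smul_apply, smul_eq_mul,
      map_zero, LinearMap.zero_apply, lie_self, zero_lie, lie_zero]
    linear_combination hDskew x y
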